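/- arXiv:1906.09979 — 2 statements merged into one kernel-verified Lean document; each statement's English description precedes it below -/
import Mathlib

section
/- Let (A,[·,·,·]) and (A′,[·,·,·]′) be 3-Lie algebras over a field F, and let ρ : A × A → End(A′) and χ : A′ × A′ → End(A) be bilinear skew-symmetric maps such that every ρ(x,y) is a derivation of A′, every χ(a,b) is a derivation of A, (A′,ρ) is a representation of A, (A,χ) is a representation of A′, and for all x1,x2,x3 ∈ A and a1,a2,a3 ∈ A′ the following four compatibility identities hold: (1) ad_{x1,x2}(χ(a1,a2)x3) − χ(a1,a2)(ad_{x1,x2}x3) = χ(ρ(x1,x2)a1, a2)x3 + χ(a1, ρ(x1,x2)a2)x3; (2) ad′_{a1,a2}(ρ(x1,x2)a3) − ρ(x1,x2)(ad′_{a1,a2}a3) = ρ(χ(a1,a2)x1, x2)a3 + ρ(x1, χ(a1,a2)x2)a3; (3) ad_{x1,x2}(χ(a1,a2)x3) = χ(ρ(x1,x2)a1, a2)x3 − χ(a1, ρ(x3,x1)a2)x2 − χ(a1, ρ(x2,x3)a2)x1; (4) ad′_{a1,a2}(ρ(x1,x2)a3) = ρ(χ(a1,a2)x1, x2)a3 −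 ρ(x1, χ(a3,a1)x2)a2 − ρ(x1, χ(a2,a3)x2)a1, where ad_{x,y}z = [x,y,z] and ad′_{a,b}c = [a,b,c]′. Then A ⊕ A′ is a 3-Lie algebra under the bracket [x1+a1, x2+a2, x3+a3] = [x1,x2,x3] + χ(a1,a2)x3 + χ(a3,a1)x2 + χ(a2,a3)x1 + [a1,a2,a3]′ + ρ(x1,x2)a3 + ρ(x3,x1)a2 + ρ(x2,x3)a1. -/
section Defs

variable {F : Type*} [Field F] {A : Type*} [AddCommGroup A] [Module F A]
variable {B : Type*} [AddCommGroup B] [Module F B]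

/-- Total skew-symmetry of a trilinear bracket. -/
def IsAlt (br : A →ₗ[F] A →ₗ[F] A →ₗ[F] A) : Prop :=
  (∀ x z, br x x z = 0) ∧ (∀ x y, br x y y = 0) ∧ (∀ x y, br x y x = 0)

/-- The Filippov (fundamental) identity. -/
def Filippov (br : A →ₗ[F] A →ₗ[F] A →ₗ[F] A) : Prop :=
  ∀ x1 x2 x3 x4 x5,
    br x1 x2 (br x3 x4 x5) =
      br (br x1 x2 x3) x4 x5 + br x3 (br x1 x2 x4) x5 + br x3 x4 (br x1 x2 x5)

/-- A 3-Lie algebra structure. -/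
def Is3Lie (br : A →ₗ[F] A →ₗ[F] A →ₗ[F] A) : Prop := IsAlt br ∧ Filippov br

/-- `(B, ρ)` is a representation of the 3-Lie algebra `(A, br)`. -/
def IsRep (br : A →ₗ[F] A →ₗ[F] A →ₗ[F] A)
    (ρ : A →ₗ[F] A →ₗ[F] B →ₗ[F] B) : Prop :=
  (∀ x1 x2 x3 x4,
    ρ x1 x2 ∘ₗ ρ x3 x4 - ρ x3 x4 ∘ₗ ρ x1 x2 =
      ρ (br x1 x2 x3) x4 + ρ x3 (br x1 x2 x4)) ∧
  (∀ x1 x2 x3 x4,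
    ρ (br x1 x2 x3) x4 =
      ρ x1 x2 ∘ₗ ρ x3 x4 + ρ x2 x3 ∘ₗ ρ x1 x4 + ρ x3 x1 ∘ₗ ρ x2 x4)

/-- Trilinearity of an unbundled ternary operation. -/
def IsTrilinearP (F : Type*) {M : Type*} [Field F] [AddCommGroup M] [Module F M]
    (m : M → M → M → M) : Prop :=
  (∀ a b c d, m (a + b) c d = m a c d + m b c d) ∧
  (∀ (s : F) a c d, m (s • a) c d = s • m a c d) ∧
  (∀ a b c d, m a (b + c) d = m a b d + m a c d) ∧
  (∀ (s : F) a b d, m a (s • b) d = s • m a b d) ∧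
  (∀ a b c d, m a b (c + d) = m a b c + m a b d) ∧
  (∀ (s : F) a b c, m a b (s • c) = s • m a b c)

/-- Total skew-symmetry of an unbundled ternary operation. -/
def IsAltP {M : Type*} [AddCommGroup M] (m : M → M → M → M) : Prop :=
  (∀ x z, m x x z = 0) ∧ (∀ x y, m x y y = 0) ∧ (∀ x y, m x y x = 0)

/-- Filippov identity for an unbundled ternary operation. -/
def FilippovP {M : Type*} [AddCommGroup M] (m : M → M → M → M) : Prop :=
  ∀ x1 x2 x3 x4 x5,
    m x1 x2 (m x3 x4 x5) =
      m (m x1 x2 x3) x4 x5 + m x3 (m x1 x2 x4) x5 + m x3 x4 (m x1 x2 x5)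

/-- Unbundled 3-Lie algebra structure. -/
def Is3LieP (F : Type*) {M : Type*} [Field F] [AddCommGroup M] [Module F M]
    (m : M → M → M → M) : Prop :=
  IsTrilinearP F m ∧ IsAltP m ∧ FilippovP m

/-- The bracket of a matched pair on `A ⊕ A'`:
`[x1+a1,x2+a2,x3+a3] = [x1,x2,x3] + χ(a1,a2)x3 + χ(a3,a1)x2 + χ(a2,a3)x1
  + [a1,a2,a3]' + ρ(x1,x2)a3 + ρ(x3,x1)a2 + ρ(x2,x3)a1`. -/
def mpBr (br : A →ₗ[F] A →ₗ[F] A →ₗ[F] A)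
    (br' : B →ₗ[F] B →ₗ[F] B →ₗ[F] B)
    (ρ : A →ₗ[F] A →ₗ[F] B →ₗ[F] B)
    (χ : B →ₗ[F] B →ₗ[F] A →ₗ[F] A) :
    A × B → A × B → A × B → A × B :=
  fun p q r =>
    (br p.1 q.1 r.1 + χ p.2 q.2 r.1 + χ r.2 p.2 q.1 + χ q.2 r.2 p.1,
     br' p.2 q.2 r.2 + ρ p.1 q.1 r.2 + ρ r.1 p.1 q.2 + ρ q.1 r.1 p.2)

end Defs

/-!
The bracket is trilinear and totally skew-symmetric because its ingredients are, and the Filippov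
identity is additive in each of its five arguments, so it only has to be checked on elements lying
in `A` or in `A'`. Each of these 32 instances is, up to skew-symmetry, one of the hypotheses: the
Filippov identities of `A` and `A'`, the representation axioms, the derivation conditions or one of
the compatibility identities (1)–(4). The hypotheses are invariant under exchanging the roles of
`(A, ρ)` and `(A', χ)`, which swaps (1) with (2) and (3) with (4) and is realised by `Prod.swap`, so
only the instances whose first argument lies in `A` need to be computed.
-/

section Generic

variable {F M : Type*} [Field F] [AddCommGroup M] [Module F M]

def IsTrilinearP.toLinearMap {m : M → M → M → M} (hm : IsTrilinearP F m) :
    M →ₗ[F] M →ₗ[F] M →ₗ[F] M :=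
  LinearMap.mk₂ F (fun p q => ⟨⟨m p q, hm.2.2.2.2.1 p q⟩, fun s r => hm.2.2.2.2.2 s p q r⟩)
    (fun p p' q => LinearMap.ext (hm.1 p p' q)) (fun s p q => LinearMap.ext (hm.2.1 s p q))
    (fun p q q' => LinearMap.ext (hm.2.2.1 p q q')) (fun s p q => LinearMap.ext (hm.2.2.2.1 s p q))

def FilippovAt (m : M → M → M → M) (x1 x2 x3 x4 x5 : M) : Prop :=
  m x1 x2 (m x3 x4 x5) = m (m x1 x2 x3) x4 x5 + m x3 (m x1 x2 x4) x5 + m x3 x4 (m x1 x2 x5)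

theorem filippov_of_closure (T : M →ₗ[F] M →ₗ[F] M →ₗ[F] M) {S : Set M}
    (hS : AddSubmonoid.closure S = ⊤)
    (h : ∀ x1 ∈ S, ∀ x2 ∈ S, ∀ x3 ∈ S, ∀ x4 ∈ S, ∀ x5 ∈ S, FilippovAt (T · · ·) x1 x2 x3 x4 x5) :
    Filippov T := by
  have induct {P : M → Prop} (zero : P 0) (add : ∀ x y, P x → P y → P (x + y))
      (mem : ∀ x ∈ S, P x) (x : M) : P x :=
    AddSubmonoid.closure_induction (motive := fun x _ => P x) mem zero (fun x y _ _ => add x y)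
      (hS ▸ AddSubmonoid.mem_top x)
  unfold Filippov
  refine induct ?_ ?_ fun x1 h1 => induct ?_ ?_ fun x2 h2 => induct ?_ ?_ fun x3 h3 =>
    induct ?_ ?_ fun x4 h4 => induct ?_ ?_ fun x5 h5 => h x1 h1 x2 h2 x3 h3 x4 h4 x5 h5
  all_goals first
    | intros; simp only [map_zero, LinearMap.zero_apply, add_zero]
    | intro y z hy hz; intros; simp only [map_add, LinearMap.add_apply, hy, hz]; abel

theorem IsAlt.neg₁₂ {br : M →ₗ[F] M →ₗ[F] M →ₗ[F] M} (h : IsAlt br) (x y : M) :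
    -br x y = br y x :=
  LinearMap.IsAlt.neg (fun x => LinearMap.ext (h.1 x)) x y

theorem IsAlt.neg₂₃ {br : M →ₗ[F] M →ₗ[F] M →ₗ[F] M} (h : IsAlt br) (x y z : M) :
    -br x y z = br x z y :=
  LinearMap.IsAlt.neg (h.2.1 x) y z

end Generic

section Representation

variable {F A B : Type*} [Field F] [AddCommGroup A] [Module F A] [AddCommGroup B] [Module F B]
  {br : A →ₗ[F] A →ₗ[F] A →ₗ[F] A} {ρ : A →ₗ[F] A →ₗ[F] B →ₗ[F] B}

theorem IsRep.comm_apply (h : IsRep br ρ) (x1 x2 x3 x4 : A) (c : B) :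
    ρ x1 x2 (ρ x3 x4 c) - ρ x3 x4 (ρ x1 x2 c) = ρ (br x1 x2 x3) x4 c + ρ x3 (br x1 x2 x4) c :=
  congr($(h.1 x1 x2 x3 x4) c)

theorem IsRep.bracket_apply (h : IsRep br ρ) (x1 x2 x3 x4 : A) (c : B) :
    ρ (br x1 x2 x3) x4 c = ρ x1 x2 (ρ x3 x4 c) + ρ x2 x3 (ρ x1 x4 c) + ρ x3 x1 (ρ x2 x4 c) :=
  congr($(h.2 x1 x2 x3 x4) c)

end Representation

section PureElements

def pureElements (A B : Type*) [Zero A] [Zero B] : Set (A × B) :=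
  Set.range (fun x => (x, 0)) ∪ Set.range (fun b => (0, b))

theorem swap_mem_pureElements {A B : Type*} [Zero A] [Zero B] {p : A × B}
    (hp : p ∈ pureElements A B) : p.swap ∈ pureElements B A := by
  rcases hp with ⟨x, rfl⟩ | ⟨b, rfl⟩
  exacts [Or.inr ⟨x, rfl⟩, Or.inl ⟨b, rfl⟩]

theorem closure_pureElements (A B : Type*) [AddZeroClass A] [AddZeroClass B] :
    AddSubmonoid.closure (pureElements A B) = ⊤ := by
  refine eq_top_iff.2 fun p _ => ?_
  have hx : (p.1, (0 : B)) ∈ AddSubmonoid.closure (pureElements A B) :=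
    AddSubmonoid.subset_closure (Or.inl ⟨p.1, rfl⟩)
  have hb : ((0 : A), p.2) ∈ AddSubmonoid.closure (pureElements A B) :=
    AddSubmonoid.subset_closure (Or.inr ⟨p.2, rfl⟩)
  simpa using add_mem hx hb

end PureElements

section MatchedPair

variable {F A B : Type*} [Field F] [AddCommGroup A] [Module F A] [AddCommGroup B] [Module F B]

structure IsMatchedPair (br : A →ₗ[F] A →ₗ[F] A →ₗ[F] A) (br' : B →ₗ[F] B →ₗ[F] B →ₗ[F] B)
    (ρ : A →ₗ[F] A →ₗ[F] B →ₗ[F] B) (χ : B →ₗ[F] B →ₗ[F] A →ₗ[F] A) : Prop where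
  is3Lie : Is3Lie br
  is3Lie' : Is3Lie br'
  isAlt_ρ : ρ.IsAlt
  isAlt_χ : χ.IsAlt
  ρ_derivation : ∀ x y a b c,
    ρ x y (br' a b c) = br' (ρ x y a) b c + br' a (ρ x y b) c + br' a b (ρ x y c)
  χ_derivation : ∀ a b x y z,
    χ a b (br x y z) = br (χ a b x) y z + br x (χ a b y) z + br x y (χ a b z)
  isRep_ρ : IsRep br ρ
  isRep_χ : IsRep br' χ
  compat₁ : ∀ x1 x2 x3 a1 a2,
    br x1 x2 (χ a1 a2 x3) - χ a1 a2 (br x1 x2 x3) =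
      χ (ρ x1 x2 a1) a2 x3 + χ a1 (ρ x1 x2 a2) x3
  compat₂ : ∀ a1 a2 a3 x1 x2,
    br' a1 a2 (ρ x1 x2 a3) - ρ x1 x2 (br' a1 a2 a3) =
      ρ (χ a1 a2 x1) x2 a3 + ρ x1 (χ a1 a2 x2) a3
  compat₃ : ∀ x1 x2 x3 a1 a2,
    br x1 x2 (χ a1 a2 x3) =
      χ (ρ x1 x2 a1) a2 x3 - χ a1 (ρ x3 x1 a2) x2 - χ a1 (ρ x2 x3 a2) x1
  compat₄ : ∀ a1 a2 a3 x1 x2,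
    br' a1 a2 (ρ x1 x2 a3) =
      ρ (χ a1 a2 x1) x2 a3 - ρ x1 (χ a3 a1 x2) a2 - ρ x1 (χ a2 a3 x2) a1

variable {br : A →ₗ[F] A →ₗ[F] A →ₗ[F] A} {br' : B →ₗ[F] B →ₗ[F] B →ₗ[F] B}
  {ρ : A →ₗ[F] A →ₗ[F] B →ₗ[F] B} {χ : B →ₗ[F] B →ₗ[F] A →ₗ[F] A}

theorem mpBr_swap (p q r : A × B) :
    (mpBr br br' ρ χ p q r).swap = mpBr br' br χ ρ p.swap q.swap r.swap := rfl

theorem isTrilinearP_mpBr : IsTrilinearP F (mpBr br br' ρ χ) := by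
  refine ⟨?_, ?_, ?_, ?_, ?_, ?_⟩ <;> intros <;> ext <;>
    simp only [mpBr, Prod.fst_add, Prod.snd_add, Prod.smul_fst, Prod.smul_snd, map_add, map_smul,
      LinearMap.add_apply, LinearMap.smul_apply, smul_add] <;> abel

theorem isAltP_mpBr (hbr : IsAlt br) (hbr' : IsAlt br') (hρ : ρ.IsAlt) (hχ : χ.IsAlt) :
    IsAltP (mpBr br br' ρ χ) := by
  refine ⟨fun p r => ?_, fun p q => ?_, fun p q => ?_⟩ <;> ext <;>
    simp only [mpBr, hbr.1, hbr.2.1, hbr.2.2, hbr'.1, hbr'.2.1, hbr'.2.2, hρ.self_eq_zero,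
      hχ.self_eq_zero, LinearMap.zero_apply, Prod.fst_zero, Prod.snd_zero, zero_add, add_zero]
  all_goals first
    | rw [← hχ.neg, LinearMap.neg_apply, neg_add_cancel]
    | rw [← hρ.neg, LinearMap.neg_apply, neg_add_cancel]

theorem filippovAt_mpBr_swap (p1 p2 p3 p4 p5 : A × B) :
    FilippovAt (mpBr br' br χ ρ) p1.swap p2.swap p3.swap p4.swap p5.swap ↔
      FilippovAt (mpBr br br' ρ χ) p1 p2 p3 p4 p5 := by
  simp only [FilippovAt, ← mpBr_swap, ← Prod.swap_add, Prod.swap_inj]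

namespace IsMatchedPair

variable (hM : IsMatchedPair br br' ρ χ)
include hM

theorem symm : IsMatchedPair br' br χ ρ :=
  ⟨hM.is3Lie', hM.is3Lie, hM.isAlt_χ, hM.isAlt_ρ, hM.χ_derivation, hM.ρ_derivation, hM.isRep_χ,
    hM.isRep_ρ, hM.compat₂, hM.compat₁, hM.compat₄, hM.compat₃⟩

theorem filippovAt_inl_inl (x1 x2 : A) {p3 p4 p5 : A × B} (h3 : p3 ∈ pureElements A B)
    (h4 : p4 ∈ pureElements A B) (h5 : p5 ∈ pureElements A B) :
    FilippovAt (mpBr br br' ρ χ) (x1, 0) (x2, 0) p3 p4 p5 := by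
  rcases h3 with ⟨x3, rfl⟩ | ⟨a3, rfl⟩ <;> rcases h4 with ⟨x4, rfl⟩ | ⟨a4, rfl⟩ <;>
    rcases h5 with ⟨x5, rfl⟩ | ⟨a5, rfl⟩ <;>
    simp only [FilippovAt, mpBr, map_zero, LinearMap.zero_apply, add_zero, zero_add,
      Prod.mk_add_mk, Prod.mk.injEq, and_true, true_and]
  · exact hM.is3Lie.2 x1 x2 x3 x4 x5
  · linear_combination (norm := abel) hM.isRep_ρ.comm_apply x1 x2 x3 x4 a5
  · linear_combination (norm := abel) hM.isRep_ρ.comm_apply x1 x2 x5 x3 a4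
  · linear_combination (norm := abel) hM.compat₁ x1 x2 x3 a4 a5
  · linear_combination (norm := abel) hM.isRep_ρ.comm_apply x1 x2 x4 x5 a3
  · linear_combination (norm := abel) hM.compat₁ x1 x2 x4 a5 a3
  · linear_combination (norm := abel) hM.compat₁ x1 x2 x5 a3 a4
  · exact hM.ρ_derivation x1 x2 a3 a4 a5

theorem filippovAt_inl_inr (x1 : A) (a2 : B) {p3 p4 p5 : A × B} (h3 : p3 ∈ pureElements A B)
    (h4 : p4 ∈ pureElements A B) (h5 : p5 ∈ pureElements A B) :
    FilippovAt (mpBr br br' ρ χ) (x1, 0) (0, a2) p3 p4 p5 := by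
  have hbr := hM.is3Lie.1
  have hbr' := hM.is3Lie'.1
  have hρ := hM.isAlt_ρ
  have hχ := hM.isAlt_χ
  rcases h3 with ⟨x3, rfl⟩ | ⟨a3, rfl⟩ <;> rcases h4 with ⟨x4, rfl⟩ | ⟨a4, rfl⟩ <;>
    rcases h5 with ⟨x5, rfl⟩ | ⟨a5, rfl⟩ <;>
    simp only [FilippovAt, mpBr, map_zero, LinearMap.zero_apply, add_zero, zero_add,
      Prod.mk_add_mk, Prod.mk.injEq, and_true, true_and]
  · linear_combination (norm := abel) hM.isRep_ρ.bracket_apply x3 x4 x5 x1 a2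
  · simp only [← hχ.neg (ρ x3 x4 a5) a2, ← hρ.neg x1 x3, ← hχ.neg a5 (ρ x4 x1 a2),
      ← hχ.neg a5 a2, LinearMap.neg_apply, map_neg]
    linear_combination (norm := abel) hM.compat₃ x3 x4 x1 a5 a2
  · simp only [← hχ.neg (ρ x5 x3 a4) a2, ← hχ.neg a4 (ρ x3 x1 a2), ← hbr.neg₂₃ x3 x5,
      ← hbr.neg₁₂ x5 x3, ← hχ.neg a4 a2, ← hρ.neg x1 x5, LinearMap.neg_apply, map_neg]
    linear_combination (norm := abel) hM.compat₃ x5 x3 x1 a4 a2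
  · simp only [← hbr'.neg₁₂ a4, ← hbr'.neg₂₃ a4 a5, ← hρ.neg x3, ← hχ.neg a5 a2,
      LinearMap.neg_apply, map_neg, neg_neg]
    linear_combination (norm := abel) -hM.compat₄ a4 a5 a2 x3 x1
  · simp only [← hχ.neg (ρ x4 x5 a3) a2, ← hbr.neg₁₂ x4, ← hbr.neg₂₃ x4 x5, ← hρ.neg x1 x4,
      ← hχ.neg a3, LinearMap.neg_apply, map_neg, neg_neg]
    linear_combination (norm := abel) hM.compat₃ x4 x5 x1 a3 a2
  · simp only [← hχ.neg a3 a5, ← hρ.neg x4, ← hbr'.neg₂₃ a3 a5, ← hχ.neg a5 a2,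
      LinearMap.neg_apply, map_neg]
    linear_combination (norm := abel) hM.compat₄ a3 a5 a2 x4 x1
  · simp only [← hρ.neg x5, ← hχ.neg a4 a2, LinearMap.neg_apply, map_neg, neg_neg]
    linear_combination (norm := abel) -hM.compat₄ a3 a4 a2 x5 x1
  · simp only [← hχ.neg (br' a3 a4 a5) a2, ← hχ.neg a3 a2, ← hχ.neg a4 a2, ← hχ.neg a5 a2,
      LinearMap.neg_apply, map_neg]
    linear_combination (norm := abel) -hM.isRep_χ.bracket_apply a3 a4 a5 a2 x1

theorem filippovAt_inl (x1 : A) {p2 p3 p4 p5 : A × B} (h2 : p2 ∈ pureElements A B)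
    (h3 : p3 ∈ pureElements A B) (h4 : p4 ∈ pureElements A B) (h5 : p5 ∈ pureElements A B) :
    FilippovAt (mpBr br br' ρ χ) (x1, 0) p2 p3 p4 p5 := by
  rcases h2 with ⟨x2, rfl⟩ | ⟨a2, rfl⟩
  exacts [hM.filippovAt_inl_inl x1 x2 h3 h4 h5, hM.filippovAt_inl_inr x1 a2 h3 h4 h5]

theorem filippovAt {p1 p2 p3 p4 p5 : A × B} (h1 : p1 ∈ pureElements A B)
    (h2 : p2 ∈ pureElements A B) (h3 : p3 ∈ pureElements A B) (h4 : p4 ∈ pureElements A B)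
    (h5 : p5 ∈ pureElements A B) : FilippovAt (mpBr br br' ρ χ) p1 p2 p3 p4 p5 := by
  rcases h1 with ⟨x1, rfl⟩ | ⟨a1, rfl⟩
  · exact hM.filippovAt_inl x1 h2 h3 h4 h5
  · rw [← filippovAt_mpBr_swap]
    exact hM.symm.filippovAt_inl a1 (swap_mem_pureElements h2) (swap_mem_pureElements h3)
      (swap_mem_pureElements h4) (swap_mem_pureElements h5)

theorem is3LieP : Is3LieP F (mpBr br br' ρ χ) := by
  have hT : IsTrilinearP F (mpBr br br' ρ χ) := isTrilinearP_mpBr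
  exact ⟨hT, isAltP_mpBr hM.is3Lie.1 hM.is3Lie'.1 hM.isAlt_ρ hM.isAlt_χ,
    filippov_of_closure hT.toLinearMap (closure_pureElements A B)
      fun _ h1 _ h2 _ h3 _ h4 _ h5 => hM.filippovAt h1 h2 h3 h4 h5⟩

end IsMatchedPair

end MatchedPair

/-- if `(A', ρ)` is a representation of `A` by derivations,
`(A, χ)` is a representation of `A'` by derivations, and the four
compatibility identities hold, then `A ⊕ A'` is a 3-Lie algebra under the
matched-pair bracket. -/
theorem matched_pair_direct_sum_three_lie
    {F A A' : Type*} [Field F] [AddCommGroup A] [Module F A]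
    [AddCommGroup A'] [Module F A']
    (br : A →ₗ[F] A →ₗ[F] A →ₗ[F] A) (h3 : Is3Lie br)
    (br' : A' →ₗ[F] A' →ₗ[F] A' →ₗ[F] A') (h3' : Is3Lie br')
    (ρ : A →ₗ[F] A →ₗ[F] A' →ₗ[F] A') (hρskew : ∀ x, ρ x x = 0)
    (χ : A' →ₗ[F] A' →ₗ[F] A →ₗ[F] A) (hχskew : ∀ a, χ a a = 0)
    (hρder : ∀ x y a b c,
      ρ x y (br' a b c) = br' (ρ x y a) b c + br' a (ρ x y b) c + br' a b (ρ x y c))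
    (hχder : ∀ a b x y z,
      χ a b (br x y z) = br (χ a b x) y z + br x (χ a b y) z + br x y (χ a b z))
    (hρrep : IsRep br ρ) (hχrep : IsRep br' χ)
    (h1 : ∀ x1 x2 x3 a1 a2,
      br x1 x2 (χ a1 a2 x3) - χ a1 a2 (br x1 x2 x3) =
        χ (ρ x1 x2 a1) a2 x3 + χ a1 (ρ x1 x2 a2) x3)
    (h2 : ∀ a1 a2 a3 x1 x2,
      br' a1 a2 (ρ x1 x2 a3) - ρ x1 x2 (br' a1 a2 a3) =
        ρ (χ a1 a2 x1) x2 a3 + ρ x1 (χ a1 a2 x2) a3)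
    (h3c : ∀ x1 x2 x3 a1 a2,
      br x1 x2 (χ a1 a2 x3) =
        χ (ρ x1 x2 a1) a2 x3 - χ a1 (ρ x3 x1 a2) x2 - χ a1 (ρ x2 x3 a2) x1)
    (h4 : ∀ a1 a2 a3 x1 x2,
      br' a1 a2 (ρ x1 x2 a3) =
        ρ (χ a1 a2 x1) x2 a3 - ρ x1 (χ a3 a1 x2) a2 - ρ x1 (χ a2 a3 x2) a1) :
    Is3LieP F (mpBr br br' ρ χ) :=
  IsMatchedPair.is3LieP
    ⟨h3, h3', hρskew, hχskew, hρder, hχder, hρrep, hχrep, h1, h2, h3c, h4⟩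
end

section
/- Let A be a finite-dimensional vector space over a field F carrying a 3-Lie algebra structure [·,·,·], and let [·,·,·]_* be a 3-Lie algebra structure on the dual space A*. Define ad* : A × A → End(A*) by (ad*_{x,y}ξ)(z) = −ξ([x,y,z]), and define aφ* : A* × A* → End(A) by the requirement ζ(aφ*_{α,β} x) = −([α,β,ζ]_*)(x) for all ζ ∈ A*. Equip A ⊕ A* with the trilinear bracket [x1+ξ1, x2+ξ2, x3+ξ3] = [x1,x2,x3] + ad*_{x1,x2}ξ3 + ad*_{x3,x1}ξ2 + ad*_{x2,x3}ξ1 + aφ*_{ξ1,ξ2}x3 + aφ*_{ξ3,ξ1}x2 + aφ*_{ξ2,ξ3}x1 + [ξ1,ξ2,ξ3]_*, and with the symmetric bilinear form (x+ξ, y+η) = η(x) + ξ(y). Then the form is invariant: ([u,v,w], z) + (w, [u,v,z]) = 0 for all u,v,w,z ∈ A ⊕ A*; moreover A and A* are isotropic, i.e., (x,y) = 0 for x,y ∈ A and (ξ,η) = 0 for ξ,η ∈ A*. -/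
section Defs

variable {F : Type*} [Field F] {A : Type*} [AddCommGroup A] [Module F A]

/-- The coadjoint action: `(coad br x y ξ) z = -ξ [x,y,z]`. -/
def coad (br : A →ₗ[F] A →ₗ[F] A →ₗ[F] A) (x y : A) :
    Module.Dual F A →ₗ[F] Module.Dual F A :=
  - (br x y).dualMap

/-- The bracket on `A ⊕ A*` built from the bracket `br` on `A`, the bracket
`brs` on `A*`, the coadjoint action of `A` on `A*`, and the coadjoint action
`aφ` of `A*` on `A`. -/
def dblBr (br : A →ₗ[F] A →ₗ[F] A →ₗ[F] A)
    (brs : Module.Dual F A →ₗ[F] Module.Dual F A →ₗ[F]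
      Module.Dual F A →ₗ[F] Module.Dual F A)
    (aφ : Module.Dual F A → Module.Dual F A → A → A) :
    A × Module.Dual F A → A × Module.Dual F A → A × Module.Dual F A →
      A × Module.Dual F A :=
  fun p q r =>
    (br p.1 q.1 r.1 + aφ p.2 q.2 r.1 + aφ r.2 p.2 q.1 + aφ q.2 r.2 p.1,
     brs p.2 q.2 r.2 + coad br p.1 q.1 r.2 + coad br r.1 p.1 q.2 +
       coad br q.1 r.1 p.2)

/-- The natural symmetric pairing `(x+ξ, y+η) = η(x) + ξ(y)` on `A ⊕ A*`. -/
def dblForm : A × Module.Dual F A → A × Module.Dual F A → F :=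
  fun p q => q.2 p.1 + p.2 q.1

end Defs


/-!
The bracket on `A ⊕ A*` is assembled so that, after using `ζ (aφ α β x) = -[α, β, ζ]_* x`,
each term of `([u,v,w], z)` is either cancelled verbatim by a term of `(w, [u,v,z])` or is
minus such a term after swapping two arguments of `[·,·,·]` or `[·,·,·]_*`.
-/

section Alternating

variable {F : Type*} [Field F] {M : Type*} [AddCommGroup M] [Module F M]
  {br : M →ₗ[F] M →ₗ[F] M →ₗ[F] M}

theorem IsAlt.swap_13 (h : IsAlt br) (x y z : M) : br x y z = -br z y x := by
  have hsum := h.2.2 (x + z) y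
  simp only [map_add, LinearMap.add_apply, h.2.2 x y, h.2.2 z y, zero_add, add_zero] at hsum
  exact eq_neg_of_add_eq_zero_right hsum

theorem IsAlt.swap_23 (h : IsAlt br) (x y z : M) : br x y z = -br x z y := by
  have hsum := h.2.1 x (y + z)
  simp only [map_add, LinearMap.add_apply, h.2.1 x y, h.2.1 x z, zero_add, add_zero] at hsum
  exact eq_neg_of_add_eq_zero_right hsum

end Alternating

section Double

variable {F A : Type*} [Field F] [AddCommGroup A] [Module F A]

theorem dblForm_comm (p q : A × Module.Dual F A) : dblForm p q = dblForm q p :=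
  add_comm _ _

theorem dblForm_dblBr (br : A →ₗ[F] A →ₗ[F] A →ₗ[F] A)
    (brs : Module.Dual F A →ₗ[F] Module.Dual F A →ₗ[F]
      Module.Dual F A →ₗ[F] Module.Dual F A)
    (aφ : Module.Dual F A → Module.Dual F A → A → A)
    (haφ : ∀ α β x (ζ : Module.Dual F A), ζ (aφ α β x) = -(brs α β ζ x))
    (u v w z : A × Module.Dual F A) :
    dblForm (dblBr br brs aφ u v w) z =
      z.2 (br u.1 v.1 w.1) - brs u.2 v.2 z.2 w.1 - brs w.2 u.2 z.2 v.1
        - brs v.2 w.2 z.2 u.1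
      + brs u.2 v.2 w.2 z.1 - w.2 (br u.1 v.1 z.1) - v.2 (br w.1 u.1 z.1)
        - u.2 (br v.1 w.1 z.1) := by
  simp only [dblForm, dblBr, coad, map_add, haφ, LinearMap.add_apply, LinearMap.neg_apply,
    LinearMap.dualMap_apply]
  ring

end Double

theorem double_bracket_form_invariant_general
    {F A : Type*} [Field F] [AddCommGroup A] [Module F A]
    (br : A →ₗ[F] A →ₗ[F] A →ₗ[F] A) (h3 : Is3Lie br)
    (brs : Module.Dual F A →ₗ[F] Module.Dual F A →ₗ[F]
      Module.Dual F A →ₗ[F] Module.Dual F A) (h3s : Is3Lie brs)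
    (aφ : Module.Dual F A → Module.Dual F A → A → A)
    (haφ : ∀ α β x (ζ : Module.Dual F A), ζ (aφ α β x) = -(brs α β ζ x)) :
    (∀ u v w z,
      dblForm (dblBr br brs aφ u v w) z + dblForm w (dblBr br brs aφ u v z) = 0) ∧
    (∀ x y : A, dblForm (x, (0 : Module.Dual F A)) (y, 0) = 0) ∧
    (∀ ξ η : Module.Dual F A, dblForm ((0 : A), ξ) ((0 : A), η) = 0) := by
  refine ⟨fun u v w z => ?_, fun x y => by simp [dblForm], fun ξ η => by simp [dblForm]⟩
  rw [dblForm_comm w, dblForm_dblBr br brs aφ haφ, dblForm_dblBr br brs aφ haφ]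
  have hu : u.2 (br v.1 w.1 z.1) = -u.2 (br v.1 z.1 w.1) := by
    rw [h3.1.swap_23, map_neg]
  have hv : v.2 (br w.1 u.1 z.1) = -v.2 (br z.1 u.1 w.1) := by
    rw [h3.1.swap_13, map_neg]
  have hu' : brs v.2 w.2 z.2 u.1 = -brs v.2 z.2 w.2 u.1 := by
    rw [h3s.1.swap_23, LinearMap.neg_apply]
  have hv' : brs w.2 u.2 z.2 v.1 = -brs z.2 u.2 w.2 v.1 := by
    rw [h3s.1.swap_13, LinearMap.neg_apply]
  linear_combination -(hu + hv + hu' + hv')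

/-- the natural pairing on `A ⊕ A*` is invariant for the bracket
built from `br`, `brs` and the two coadjoint actions, and `A`, `A*` are
isotropic. -/
theorem double_bracket_form_invariant
    {F A : Type*} [Field F] [AddCommGroup A] [Module F A] [FiniteDimensional F A]
    (br : A →ₗ[F] A →ₗ[F] A →ₗ[F] A) (h3 : Is3Lie br)
    (brs : Module.Dual F A →ₗ[F] Module.Dual F A →ₗ[F]
      Module.Dual F A →ₗ[F] Module.Dual F A) (h3s : Is3Lie brs)
    (aφ : Module.Dual F A → Module.Dual F A → A → A)
    (haφ : ∀ α β x (ζ : Module.Dual F A), ζ (aφ α β x) = -(brs α β ζ x)) :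
    (∀ u v w z,
      dblForm (dblBr br brs aφ u v w) z + dblForm w (dblBr br brs aφ u v z) = 0) ∧
    (∀ x y : A, dblForm (x, (0 : Module.Dual F A)) (y, 0) = 0) ∧
    (∀ ξ η : Module.Dual F A, dblForm ((0 : A), ξ) ((0 : A), η) = 0) :=
  double_bracket_form_invariant_general br h3 brs h3s aφ haφ
end
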